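/- With 𝓛, 𝓛_k, ℰ as above, if P is a homogeneous polynomial in y_1,…,y_k of degree −2k under the grading deg y_j = −2j, then 𝓛(𝓛_k P) = 𝓛_k(𝓛 P). -/
import Mathlib


open MvPolynomial

/-- The shift derivation Σ_s y_{s+1} ∂/∂y_s (variable `X i` represents y_{i+1}). -/
noncomputable def shiftD (P : MvPolynomial ℕ ℝ) : MvPolynomial ℕ ℝ :=
  ∑ s ∈ P.vars, X (s + 1) * pderiv s P

/-- The operator 𝓛_k = Σ_s y_{s+1} ∂/∂y_s + 2k y_1 (multiplication). -/
noncomputable def Lop (k : ℝ) (P : MvPolynomial ℕ ℝ) : MvPolynomial ℕ ℝ :=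
  shiftD P + C (2 * k) * X 0 * P

/-- The derivation 𝓛 with 𝓛 y_1 = 1 and 𝓛 y_{s+1} = −(s+1)s y_s for s ≥ 1. -/
noncomputable def Lder (P : MvPolynomial ℕ ℝ) : MvPolynomial ℕ ℝ :=
  pderiv 0 P - ∑ s ∈ P.vars,
    if 1 ≤ s then (C (((s + 1) * s : ℕ) : ℝ) * X (s - 1) * pderiv s P) else 0

/-- The Euler-type operator ℰ = −2 Σ_s s y_s ∂/∂y_s. -/
noncomputable def Eop (P : MvPolynomial ℕ ℝ) : MvPolynomial ℕ ℝ :=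
  - ∑ s ∈ P.vars, C ((2 * (s + 1) : ℕ) : ℝ) * X s * pderiv s P

/-- Z_2 = y_2 + y_1², Z_{k+1} = 𝓛_k Z_k; the differential polynomials 𝒟_k = Z_{k+1}. -/
noncomputable def Z : ℕ → MvPolynomial ℕ ℝ
  | 0 => 0
  | 1 => 0
  | 2 => X 1 + X 0 ^ 2
  | (n + 3) => Lop ((n + 2 : ℕ) : ℝ) (Z (n + 2))

noncomputable def fS : ℕ → MvPolynomial ℕ ℝ := fun s => X (s + 1)
noncomputable def fL : ℕ → MvPolynomial ℕ ℝ := fun s =>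
  if s = 0 then 1 else -(C (((s + 1) * s : ℕ) : ℝ) * X (s - 1))
noncomputable def fE : ℕ → MvPolynomial ℕ ℝ := fun s => -(C ((2 * (s + 1) : ℕ) : ℝ) * X s)

lemma mkDerivation_eq_sum (f : ℕ → MvPolynomial ℕ ℝ) (P : MvPolynomial ℕ ℝ)
    (t : Finset ℕ) (ht : P.vars ⊆ t) :
    mkDerivation ℝ f P = ∑ s ∈ t, f s * pderiv s P := by
  conv_lhs => rw [P.as_sum]
  rw [map_sum]
  have : ∀ s ∈ t, f s * pderiv s P
      = ∑ v ∈ P.support, f s * pderiv s (monomial v (coeff v P)) := by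
    intro s _
    conv_lhs => rw [P.as_sum]
    rw [map_sum, Finset.mul_sum]
  rw [Finset.sum_congr rfl this, Finset.sum_comm]
  refine Finset.sum_congr rfl fun v hv => ?_
  have hsub : v.support ⊆ t := fun i hi =>
    ht ((mem_vars i).mpr ⟨v, hv, hi⟩)
  rw [mkDerivation_monomial, ← Finset.sum_subset hsub
    (fun s _ hs => by
      rw [pderiv_monomial, Finsupp.notMem_support_iff.mp hs]
      simp)]
  rw [Finsupp.sum, Finset.smul_sum]
  refine Finset.sum_congr rfl fun i _ => ?_
  rw [pderiv_monomial, smul_eq_C_mul, smul_eq_mul, ← C_mul_monomial]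
  ring

lemma shiftD_eq (P : MvPolynomial ℕ ℝ) : shiftD P = mkDerivation ℝ fS P := by
  rw [mkDerivation_eq_sum fS P P.vars subset_rfl, shiftD]
  simp [fS]

lemma Lder_eq (P : MvPolynomial ℕ ℝ) : Lder P = mkDerivation ℝ fL P := by
  rw [mkDerivation_eq_sum fL P (insert 0 P.vars) (Finset.subset_insert 0 P.vars), Lder]
  have h1 : ∑ s ∈ P.vars,
      (if 1 ≤ s then (C (((s + 1) * s : ℕ) : ℝ) * X (s - 1) * pderiv s P) else 0)
      = ∑ s ∈ insert 0 P.vars,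
      (if 1 ≤ s then (C (((s + 1) * s : ℕ) : ℝ) * X (s - 1) * pderiv s P) else 0) := by
    refine Finset.sum_subset (Finset.subset_insert 0 P.vars) fun s _ hs => ?_
    rw [pderiv_eq_zero_of_notMem_vars hs]
    simp
  have h2 : pderiv 0 P = ∑ s ∈ insert 0 P.vars,
      (if s = 0 then pderiv 0 P else 0) := by
    rw [Finset.sum_ite_eq' (insert 0 P.vars) 0 fun _ => pderiv 0 P]
    simp
  rw [h1, h2, ← Finset.sum_sub_distrib]
  refine Finset.sum_congr rfl fun s _ => ?_
  rcases s with _ | j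
  · simp [fL]
  · simp only [fL, Nat.succ_ne_zero, if_false, Nat.le_add_left 1 j, if_true,
      Nat.add_sub_cancel, zero_sub]
    ring

lemma Eop_eq (P : MvPolynomial ℕ ℝ) : Eop P = mkDerivation ℝ fE P := by
  rw [mkDerivation_eq_sum fE P P.vars subset_rfl, Eop, ← Finset.sum_neg_distrib]
  refine Finset.sum_congr rfl fun s _ => ?_
  simp only [fE]
  ring

lemma bracket_eq : ⁅mkDerivation ℝ fL, mkDerivation ℝ fS⁆ = mkDerivation ℝ fE := by
  refine derivation_ext fun j => ?_
  rw [Derivation.commutator_apply]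
  rcases j with _ | n
  · simp [fL, fS, fE, mkDerivation_X]
  · have hc : ((((n:ℕ) + 1 + 1 + 1) * (n + 1 + 1) : ℕ) : ℝ)
        = (((n + 1 + 1) * (n + 1) : ℕ) : ℝ) + ((2 * (n + 1 + 1) : ℕ) : ℝ) := by
      push_cast; ring
    simp only [fL, fS, fE, mkDerivation_X, Nat.succ_ne_zero, if_false, Nat.add_sub_cancel,
      map_neg, Derivation.leibniz, derivation_C, smul_zero, smul_eq_mul, add_zero, mul_zero,
      zero_add]
    rw [hc, map_add]
    ring

lemma euler (k : ℕ) (P : MvPolynomial ℕ ℝ)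
    (hhom : P.IsWeightedHomogeneous (fun i => i + 1) k) :
    mkDerivation ℝ fE P = C (-(2 * (k : ℝ))) * P := by
  conv_lhs => rw [P.as_sum]
  conv_rhs => rw [P.as_sum]
  rw [map_sum, Finset.mul_sum]
  refine Finset.sum_congr rfl fun v hv => ?_
  have hw : Finsupp.weight (fun i => i + 1) v = k := hhom (mem_support_iff.mp hv)
  have key : ∑ i ∈ v.support, ((v i * (i + 1) : ℕ) : ℝ) = (k : ℝ) := by
    have h := hw
    rw [Finsupp.weight_apply, Finsupp.sum] at h
    simp only [smul_eq_mul] at h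
    rw [← h]
    push_cast
    ring
  rw [mkDerivation_monomial, Finsupp.sum, Finset.smul_sum, C_mul_monomial]
  have hterm : ∀ i ∈ v.support,
      coeff v P • ((monomial (v - Finsupp.single i 1)) ((v i : ℕ) : ℝ) • fE i)
        = monomial v (-(2 * ((v i * (i + 1) : ℕ) : ℝ)) * coeff v P) := by
    intro i hi
    have hle : Finsupp.single i 1 ≤ v := by
      rw [Finsupp.single_le_iff]
      exact Nat.one_le_iff_ne_zero.mpr (Finsupp.mem_support_iff.mp hi)
    have hXi : (monomial (v - Finsupp.single i 1)) ((v i : ℕ) : ℝ) * X i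
        = monomial v ((v i : ℕ) : ℝ) := by
      rw [X, monomial_mul, mul_one, tsub_add_cancel_of_le hle]
    have h2 : (monomial (v - Finsupp.single i 1)) ((v i : ℕ) : ℝ) * fE i
        = -(C (((2 * (i + 1) : ℕ) : ℝ)) * monomial v ((v i : ℕ) : ℝ)) := by
      rw [← hXi, fE]; ring
    rw [smul_eq_mul, h2, smul_eq_C_mul, mul_neg, C_mul_monomial, C_mul_monomial, ← map_neg]
    congr 1
    push_cast
    ring
  rw [Finset.sum_congr rfl hterm, ← map_sum]
  congr 1
  rw [← Finset.sum_mul]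
  congr 1
  rw [Finset.sum_neg_distrib, ← Finset.mul_sum, key]

/-- If P is homogeneous of degree −2k (grading deg y_j = −2j, i.e. weighted
homogeneous of weight k for the weight w(y_j) = j) in the variables y_1,…,y_k,
then 𝓛 𝓛_k P = 𝓛_k 𝓛 P. -/
theorem L_Lk_commute_on_homogeneous (k : ℕ)
    (P : MvPolynomial ℕ ℝ)
    (hvars : P.vars ⊆ Finset.range k)
    (hhom : P.IsWeightedHomogeneous (fun i => i + 1) k) :
    Lder (Lop (k : ℝ) P) = Lop (k : ℝ) (Lder P) := by
  have hbr : mkDerivation ℝ fL (mkDerivation ℝ fS P)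
      - mkDerivation ℝ fS (mkDerivation ℝ fL P) = mkDerivation ℝ fE P := by
    rw [← Derivation.commutator_apply, bracket_eq]
  have he : mkDerivation ℝ fE P = C (-(2 * (k : ℝ))) * P := euler k P hhom
  simp only [Lop, Lder_eq, shiftD_eq, map_add]
  have hprod : mkDerivation ℝ fL (C (2 * (k : ℝ)) * X 0 * P)
      = C (2 * (k : ℝ)) * (X 0 * mkDerivation ℝ fL P + P) := by
    rw [mul_assoc, ← smul_eq_C_mul, Derivation.map_smul, Derivation.leibniz, mkDerivation_X]
    simp only [fL, eq_self_iff_true, if_true, smul_eq_mul, mul_one]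
    rw [smul_eq_C_mul]
  rw [hprod]
  have hcomm : mkDerivation ℝ fL (mkDerivation ℝ fS P)
      = mkDerivation ℝ fS (mkDerivation ℝ fL P) + C (-(2 * (k : ℝ))) * P := by
    rw [← he, ← hbr]; ring
  rw [hcomm, map_neg]
  ring
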